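/- Let A be a Φ-local Φ-ring. Then A is integrally closed in its closure A^◁ = S⁻¹A, where S is the set of elements of A generating an admissible ideal. -/

import Mathlib

/-- A ring with constructible supports (a `Φ`-ring): a commutative ring together with a
family of finitely generated ideals (the *admissible* ideals) containing the unit ideal,
stable under products, and such that any finitely generated ideal containing an admissible
ideal is admissible. -/
structure PhiRing (A : Type*) [CommRing A] where
  adm : Set (Ideal A)
  fg_of_mem : ∀ I ∈ adm, I.FG
  top_mem : ⊤ ∈ adm
  mul_mem : ∀ I ∈ adm, ∀ J ∈ adm, I * J ∈ adm
  enlarge_mem : ∀ I ∈ adm, ∀ J : Ideal A, J.FG → I ≤ J → J ∈ adm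

/-- The multiplicative set of elements of `A` generating an admissible ideal. -/
def PhiRing.S {A : Type*} [CommRing A] (Φ : PhiRing A) : Submonoid A where
  carrier := {a : A | Ideal.span {a} ∈ Φ.adm}
  one_mem' := by
    show Ideal.span {(1 : A)} ∈ Φ.adm
    rw [Ideal.span_singleton_one]
    exact Φ.top_mem
  mul_mem' := by
    intro a b ha hb
    show Ideal.span {a * b} ∈ Φ.adm
    rw [← Ideal.span_singleton_mul_span_singleton]
    exact Φ.mul_mem _ ha _ hb

/-- `A` is `Φ`-local if (it is local and) every admissible ideal is invertible;
in a local ring, an ideal is invertible iff it is generated by a single nonzerodivisor. -/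
def PhiRing.IsPhiLocal {A : Type*} [CommRing A] (Φ : PhiRing A) : Prop :=
  ∀ I ∈ Φ.adm, ∃ a ∈ nonZeroDivisors A, I = Ideal.span {a}

/-!
Write `x = a / s` with `s ∈ S`. The ideal `(a, s)` contains the admissible ideal `(s)`, so it is
admissible, hence `(a, s) = (d)` for a nonzerodivisor `d`. Dividing by `d` gives `x = a' / s'` with
`a'` and `s'` coprime. For an integral element the denominator of a fraction divides a power of
its numerator (via the scaled-roots polynomial), so `s'` divides `a'ⁿ` while being coprime to it;
hence `s'` is a unit and `x = a' s'⁻¹ ∈ A`.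
-/

theorem IsCoprime.isUnit_of_dvd_pow {R : Type*} [CommSemiring R] {a s : R} {n : ℕ}
    (hcop : IsCoprime a s) (hdvd : s ∣ a ^ n) : IsUnit s :=
  hcop.pow_left.isUnit_of_dvd' hdvd dvd_rfl

theorem mem_range_algebraMap_of_isIntegral_of_isCoprime {A B : Type*} [CommRing A] [CommRing B]
    [Algebra A B] (hinj : Function.Injective (algebraMap A B)) {x : B} (hx : IsIntegral A x)
    {a s : A} (hcop : IsCoprime a s) (hxas : algebraMap A B s * x = algebraMap A B a) :
    x ∈ (algebraMap A B).range := by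
  obtain ⟨p, hp, hroot⟩ := hx
  obtain ⟨u, rfl⟩ := hcop.isUnit_of_dvd_pow
    (Polynomial.dvd_pow_natDegree_of_eval₂_eq_zero hinj hp s a x hroot hxas)
  refine ⟨a * ↑u⁻¹, ?_⟩
  rw [map_mul, ← hxas, mul_comm, ← mul_assoc, ← map_mul, Units.inv_mul, map_one, one_mul]

namespace PhiRing

variable {A : Type*} [CommRing A] (Φ : PhiRing A)

theorem S_le_nonZeroDivisors (hΦ : Φ.IsPhiLocal) : Φ.S ≤ nonZeroDivisors A := by
  intro s hs
  obtain ⟨t, ht, hst⟩ := hΦ _ hs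
  obtain ⟨u, rfl⟩ : s ∣ t := Ideal.mem_span_singleton.mp (hst ▸ Ideal.mem_span_singleton_self t)
  exact (mul_mem_nonZeroDivisors.mp ht).1

theorem span_pair_mem_adm {s : A} (hs : s ∈ Φ.S) (a : A) : Ideal.span {a, s} ∈ Φ.adm :=
  Φ.enlarge_mem _ hs _ (Submodule.fg_span (Set.toFinite _))
    (Ideal.span_mono (Set.subset_insert a {s}))

theorem exists_isCoprime_of_mem_S (hΦ : Φ.IsPhiLocal) {s : A} (hs : s ∈ Φ.S) (a : A) :
    ∃ a' s' d : A, d ∈ Φ.S ∧ a' * d = a ∧ s' * d = s ∧ IsCoprime a' s' := by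
  obtain ⟨d, hd, hspan⟩ := hΦ _ (Φ.span_pair_mem_adm hs a)
  have hdS : d ∈ Φ.S := show Ideal.span {d} ∈ Φ.adm from hspan ▸ Φ.span_pair_mem_adm hs a
  have hmem : ∀ y ∈ ({a, s} : Set A), ∃ y', y' * d = y := fun y hy =>
    Ideal.mem_span_singleton'.mp (hspan ▸ Ideal.subset_span hy)
  obtain ⟨a', ha'⟩ := hmem a (Set.mem_insert a {s})
  obtain ⟨s', hs'⟩ := hmem s (Set.mem_insert_of_mem a rfl)
  obtain ⟨α, β, hαβ⟩ := Ideal.mem_span_pair.mp (hspan ▸ Ideal.mem_span_singleton_self d)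
  refine ⟨a', s', d, hdS, ha', hs', α, β, (mul_cancel_right_mem_nonZeroDivisors hd).mp ?_⟩
  rw [add_mul, mul_assoc, mul_assoc, ha', hs', hαβ, one_mul]

end PhiRing

theorem PhiRing.integrally_closed_in_closure_general
    {A : Type*} [CommRing A] (Φ : PhiRing A) (hΦ : Φ.IsPhiLocal) :
    ∀ x : Localization Φ.S, IsIntegral A x → x ∈ (algebraMap A (Localization Φ.S)).range := by
  intro x hx
  obtain ⟨⟨a, s⟩, hxs⟩ := IsLocalization.surj Φ.S x
  obtain ⟨a', s', d, hd, rfl, hs', hcop⟩ := Φ.exists_isCoprime_of_mem_S hΦ s.2 a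
  refine mem_range_algebraMap_of_isIntegral_of_isCoprime
    (IsLocalization.injective _ (Φ.S_le_nonZeroDivisors hΦ)) hx hcop ?_
  refine (IsLocalization.map_units (Localization Φ.S) (⟨d, hd⟩ : Φ.S)).mul_right_cancel ?_
  rw [mul_right_comm, ← map_mul, hs', ← map_mul, mul_comm]
  exact hxs

/-- Let `A` be a `Φ`-local `Φ`-ring.  Then `A` is integrally closed in its closure
`A^◁ = S⁻¹A`, where `S` is the set of elements of `A` generating an admissible ideal:
every element of `S⁻¹A` integral over `A` lies in (the image of) `A`. -/
theorem PhiRing.integrally_closed_in_closure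
    {A : Type*} [CommRing A] [IsLocalRing A] (Φ : PhiRing A) (hΦ : Φ.IsPhiLocal) :
    ∀ x : Localization Φ.S, IsIntegral A x → x ∈ (algebraMap A (Localization Φ.S)).range :=
  PhiRing.integrally_closed_in_closure_general Φ hΦ
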